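/- arXiv:2011.00151 — 6 statements merged into one kernel-verified Lean document; each statement's English description precedes it below -/
import Mathlib

section
/- Let V be a finite-dimensional vector space over F_2 and let E ⊆ V \ {0}. Then E is affine (there exists a linear functional f : V → F_2 with f(e) = 1 for all e ∈ E) if and only if E contains no induced odd circuit, i.e., there is no odd n ≥ 3 and no set {x_1, ..., x_n} of n distinct vectors with x_1 + ... + x_n = 0, every proper subset of {x_1,...,x_n} linearly independent, and E ∩ span{x_1,...,x_n} = {x_1, ..., x_n}. -/
/-!
Embed `V` in `V × 𝔽₂` by `e ↦ (e, 1)`. A functional equal to `1` on `E` exists iff `(0, 1)` is not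
in the span of the image of `E`, i.e. iff no odd subset of `E` sums to zero. Conversely, an odd
zero-sum subset `S ⊆ E` of minimum size is an induced odd circuit: a nonempty zero-sum proper
subset `B`, or an element `y ∈ E ∖ S` written as the sum of some `A ⊆ S`, would produce a smaller
odd zero-sum subset of `E` (one of `B`, `S ∖ B`, resp. one of `A ∪ {y}`, `(S ∖ A) ∪ {y}`).
-/

open Submodule Finset

namespace ZModModule

variable {V : Type*} [AddCommGroup V] [Module (ZMod 2) V]

lemma linearCombination_id_eq_sum_support (l : V →₀ ZMod 2) :
    Finsupp.linearCombination (ZMod 2) id l = ∑ a ∈ l.support, a := by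
  rw [Finsupp.linearCombination_apply, Finsupp.sum]
  refine sum_congr rfl fun a ha => ?_
  rw [(by decide : ∀ c : ZMod 2, c ≠ 0 → c = 1) _ (Finsupp.mem_support_iff.mp ha), one_smul, id]

lemma exists_finset_sum_eq_of_mem_span {s : Set V} {x : V} (hx : x ∈ span (ZMod 2) s) :
    ∃ A : Finset V, ↑A ⊆ s ∧ ∑ a ∈ A, a = x := by
  rw [← s.image_id, Finsupp.mem_span_image_iff_linearCombination] at hx
  obtain ⟨l, hl, rfl⟩ := hx
  exact ⟨l.support, (Finsupp.mem_supported _ _).mp hl, (linearCombination_id_eq_sum_support l).symm⟩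

lemma linearIndepOn_id_of_forall_sum_eq_zero {s : Set V}
    (h : ∀ A : Finset V, ↑A ⊆ s → ∑ a ∈ A, a = 0 → A = ∅) : LinearIndepOn (ZMod 2) id s := by
  refine linearIndepOn_iff.mpr fun l hl hl0 => ?_
  rw [linearCombination_id_eq_sum_support] at hl0
  exact Finsupp.support_eq_empty.mp (h _ ((Finsupp.mem_supported _ _).mp hl) hl0)

lemma sum_sdiff_eq_sum_of_sum_eq_zero {ι : Type*} [DecidableEq ι] (f : ι → V)
    {s t : Finset ι} (hst : s ⊆ t) (ht : ∑ i ∈ t, f i = 0) :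
    ∑ i ∈ t \ s, f i = ∑ i ∈ s, f i := by
  rw [sum_sdiff_eq_sub hst, ht, zero_sub, neg_eq_self]

end ZModModule

lemma exists_linearMap_eq_one_of_notMem_span {K V : Type*} [Field K] [AddCommGroup V]
    [Module K V] {E : Set V} (h : ((0 : V), (1 : K)) ∉ span K ((·, (1 : K)) '' E)) :
    ∃ f : V →ₗ[K] K, ∀ e ∈ E, f e = 1 := by
  obtain ⟨φ, hφ, hker⟩ := exists_le_ker_of_notMem h
  refine ⟨-(φ (0, 1))⁻¹ • φ.comp (LinearMap.inl K V K), fun e he => ?_⟩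
  have he : φ (e, 0) + φ (0, 1) = 0 := by
    rw [← map_add, Prod.mk_add_mk, add_zero, zero_add]
    exact hker (subset_span ⟨e, he, rfl⟩)
  simp only [LinearMap.smul_apply, LinearMap.comp_apply, LinearMap.inl_apply, smul_eq_mul,
    eq_neg_of_add_eq_zero_left he]
  field_simp

lemma Nat.odd_iff_even_sub {m n : ℕ} (hn : Odd n) (hmn : m ≤ n) : Odd m ↔ Even (n - m) := by
  rcases hn with ⟨k, rfl⟩
  simp only [Nat.odd_iff, Nat.even_iff]
  omega

section OddZeroSum

variable {V : Type*} [AddCommGroup V]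

def IsOddZeroSumSubset (E : Set V) (S : Finset V) : Prop :=
  ↑S ⊆ E ∧ Odd S.card ∧ ∑ x ∈ S, x = 0

def IsMinimalOddZeroSumSubset (E : Set V) (S : Finset V) : Prop :=
  IsOddZeroSumSubset E S ∧ ∀ T, IsOddZeroSumSubset E T → S.card ≤ T.card

lemma IsOddZeroSumSubset.three_le_card {E : Set V} {S : Finset V} (hS : IsOddZeroSumSubset E S)
    (h0 : (0 : V) ∉ E) : 3 ≤ S.card := by
  obtain ⟨hSE, ⟨k, hk⟩, hsum⟩ := hS
  have hne : S.card ≠ 1 := by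
    intro h1
    obtain ⟨a, rfl⟩ := card_eq_one.mp h1
    rw [sum_singleton] at hsum
    exact h0 (hsum ▸ hSE (mem_singleton_self a))
  omega

lemma exists_isMinimalOddZeroSumSubset {E : Set V} (h : ∃ S, IsOddZeroSumSubset E S) :
    ∃ S, IsMinimalOddZeroSumSubset E S := by
  obtain ⟨S, hS, hmin⟩ := (measure Finset.card).wf.has_min _ h
  exact ⟨S, hS, fun T hT => not_lt.mp (hmin T hT)⟩

variable [Module (ZMod 2) V]

lemma exists_isOddZeroSumSubset_of_mem_span {E : Set V}
    (h : ((0 : V), (1 : ZMod 2)) ∈ span (ZMod 2) ((·, (1 : ZMod 2)) '' E)) :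
    ∃ S, IsOddZeroSumSubset E S := by
  classical
  obtain ⟨A, hAE, hA⟩ := ZModModule.exists_finset_sum_eq_of_mem_span h
  obtain ⟨S, hSE, rfl⟩ := subset_set_image_iff.mp hAE
  rw [sum_image fun x _ y _ h => congrArg Prod.fst h] at hA
  refine ⟨S, hSE, ?_, by simpa [Prod.fst_sum] using congrArg Prod.fst hA⟩
  simpa [Prod.snd_sum, ZMod.natCast_eq_one_iff_odd] using congrArg Prod.snd hA

lemma not_isOddZeroSumSubset_of_forall_eq_one {E : Set V} {f : V →ₗ[ZMod 2] ZMod 2}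
    (hf : ∀ e ∈ E, f e = 1) (S : Finset V) : ¬ IsOddZeroSumSubset E S := by
  rintro ⟨hSE, hodd, hsum⟩
  have hfS : f (∑ x ∈ S, x) = S.card := by
    rw [map_sum, sum_congr rfl fun x hx => hf x (hSE hx)]
    simp
  rw [hsum, map_zero, eq_comm, ZMod.natCast_eq_zero_iff_even] at hfS
  exact Nat.not_even_iff_odd.mpr hodd hfS

lemma exists_linearMap_eq_one_iff_forall_not_isOddZeroSumSubset (E : Set V) :
    (∃ f : V →ₗ[ZMod 2] ZMod 2, ∀ e ∈ E, f e = 1) ↔ ∀ S, ¬ IsOddZeroSumSubset E S := by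
  refine ⟨fun ⟨f, hf⟩ => not_isOddZeroSumSubset_of_forall_eq_one hf, fun h => ?_⟩
  refine exists_linearMap_eq_one_of_notMem_span fun hmem => ?_
  obtain ⟨S, hS⟩ := exists_isOddZeroSumSubset_of_mem_span hmem
  exact h S hS

namespace IsMinimalOddZeroSumSubset

variable [DecidableEq V] {E : Set V} {S : Finset V}

lemma eq_empty_of_ssubset_of_sum_eq_zero (hS : IsMinimalOddZeroSumSubset E S) {B : Finset V}
    (hBS : B ⊂ S) (hB : ∑ x ∈ B, x = 0) : B = ∅ := by
  obtain ⟨⟨hSE, hSodd, hSsum⟩, hmin⟩ := hS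
  have hle := card_le_card hBS.subset
  rcases Nat.even_or_odd (S \ B).card with h | h
  · rw [card_sdiff_of_subset hBS.subset, ← Nat.odd_iff_even_sub hSodd hle] at h
    have := hmin B ⟨(coe_subset.mpr hBS.subset).trans hSE, h, hB⟩
    exact absurd (card_lt_card hBS) (not_lt.mpr this)
  · have := hmin _ ⟨(coe_subset.mpr sdiff_subset).trans hSE, h,
      by rw [ZModModule.sum_sdiff_eq_sum_of_sum_eq_zero _ hBS.subset hSsum, hB]⟩
    rw [card_sdiff_of_subset hBS.subset] at this
    exact card_eq_zero.mp (by omega)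

lemma linearIndepOn_of_ssubset (hS : IsMinimalOddZeroSumSubset E S) {T : Finset V}
    (hTS : T ⊂ S) : LinearIndepOn (ZMod 2) id (T : Set V) :=
  ZModModule.linearIndepOn_id_of_forall_sum_eq_zero fun _ hA =>
    hS.eq_empty_of_ssubset_of_sum_eq_zero ((coe_subset.mp hA).trans_ssubset hTS)

lemma mem_of_mem_span (hS : IsMinimalOddZeroSumSubset E S) {y : V} (hyE : y ∈ E)
    (hy : y ∈ span (ZMod 2) (S : Set V)) : y ∈ S := by
  obtain ⟨⟨hSE, hSodd, hSsum⟩, hmin⟩ := hS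
  by_contra hyS
  obtain ⟨A, hAS, hAy⟩ := ZModModule.exists_finset_sum_eq_of_mem_span hy
  replace hAS : A ⊆ S := coe_subset.mp hAS
  have hsdiff := ZModModule.sum_sdiff_eq_sum_of_sum_eq_zero (fun x => x) hAS hSsum
  obtain ⟨B, hBS, hBeven, hBy⟩ : ∃ B ⊆ S, Even B.card ∧ ∑ x ∈ B, x = y := by
    rcases Nat.even_or_odd A.card with h | h
    · exact ⟨A, hAS, h, hAy⟩
    · refine ⟨S \ A, sdiff_subset, ?_, hsdiff.trans hAy⟩
      rwa [card_sdiff_of_subset hAS, ← Nat.odd_iff_even_sub hSodd (card_le_card hAS)]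
  have hyB : y ∉ B := fun h => hyS (hBS h)
  have hle : S.card ≤ B.card + 1 := by
    rw [← card_insert_of_notMem hyB]
    refine hmin (insert y B) ⟨?_, ?_, ?_⟩
    · rw [coe_insert]
      exact Set.insert_subset hyE ((coe_subset.mpr hBS).trans hSE)
    · rw [card_insert_of_notMem hyB]
      exact hBeven.add_one
    · rw [sum_insert hyB, hBy, ZModModule.add_self]
  obtain ⟨s, hs⟩ : ∃ s, S \ B = {s} := by
    refine card_eq_one.mp ?_
    have := card_le_card hBS
    rcases hSodd with ⟨k, hk⟩
    rcases hBeven with ⟨j, hj⟩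
    rw [card_sdiff_of_subset hBS]
    omega
  have hsy : s = y := by
    rw [← hBy, ← ZModModule.sum_sdiff_eq_sum_of_sum_eq_zero (fun x => x) hBS hSsum, hs, sum_singleton]
  exact hyS (hsy ▸ (mem_sdiff.mp (hs ▸ mem_singleton_self s)).1)

lemma inter_span_eq (hS : IsMinimalOddZeroSumSubset E S) :
    E ∩ (span (ZMod 2) (S : Set V) : Set V) = S :=
  Set.Subset.antisymm (fun _ ⟨hyE, hy⟩ => hS.mem_of_mem_span hyE hy)
    fun _ hx => ⟨hS.1.1 hx, subset_span hx⟩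

end IsMinimalOddZeroSumSubset

end OddZeroSum

theorem stmt2_general {V : Type*} [AddCommGroup V] [Module (ZMod 2) V]
    (E : Set V) (h0 : (0 : V) ∉ E) :
    (∃ f : V →ₗ[ZMod 2] ZMod 2, ∀ e ∈ E, f e = 1) ↔
      ¬ ∃ (n : ℕ) (S : Finset V), Odd n ∧ 3 ≤ n ∧ S.card = n ∧ (∑ x ∈ S, x) = 0 ∧
        (∀ T : Finset V, T ⊂ S →
          LinearIndependent (ZMod 2) (Subtype.val : ↥(T : Set V) → V)) ∧
        E ∩ (span (ZMod 2) (S : Set V) : Set V) = (S : Set V) := by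
  classical
  rw [exists_linearMap_eq_one_iff_forall_not_isOddZeroSumSubset]
  constructor
  · rintro hE ⟨n, S, hodd, -, rfl, hsum, -, hinduced⟩
    exact hE S ⟨hinduced.symm.subset.trans Set.inter_subset_left, hodd, hsum⟩
  · rintro hno S₀ hS₀
    obtain ⟨S, hS⟩ := exists_isMinimalOddZeroSumSubset ⟨S₀, hS₀⟩
    exact hno ⟨S.card, S, hS.1.2.1, hS.1.three_le_card h0, rfl, hS.1.2.2,
      fun _ hT => hS.linearIndepOn_of_ssubset hT, hS.inter_span_eq⟩

theorem stmt2 {V : Type*} [AddCommGroup V] [Module (ZMod 2) V]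
    [FiniteDimensional (ZMod 2) V] (E : Set V) (h0 : (0 : V) ∉ E) :
    (∃ f : V →ₗ[ZMod 2] ZMod 2, ∀ e ∈ E, f e = 1) ↔
      ¬ ∃ (n : ℕ) (S : Finset V), Odd n ∧ 3 ≤ n ∧ S.card = n ∧ (∑ x ∈ S, x) = 0 ∧
        (∀ T : Finset V, T ⊂ S →
          LinearIndependent (ZMod 2) (Subtype.val : ↥(T : Set V) → V)) ∧
        E ∩ (span (ZMod 2) (S : Set V) : Set V) = (S : Set V) :=
  stmt2_general E h0
end

section
/- Let E_1, E_2, E_3 be three sets of edges of the complete graph K_5 whose union is all of E(K_5), such that no E_i contains two vertex-disjoint edges. Then some E_i contains the three edges of a triangle. -/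
/-!
Without a triangle, a family of pairwise intersecting edges is a star: all its edges pass through
one vertex. Three stars have at most three centres, so two of the five vertices avoid all of them,
and the edge joining those two lies in none of the three families.
-/

namespace Sym2

variable {V : Type*}

def HasTriangle (E : Set (Sym2 V)) : Prop :=
  ∃ a b c : V, a ≠ b ∧ a ≠ c ∧ b ≠ c ∧ s(a, b) ∈ E ∧ s(b, c) ∈ E ∧ s(a, c) ∈ E

lemma mem_of_exists_mem_mem_of_notMem {a b : V} {f : Sym2 V}
    (hmeet : ∃ v, v ∈ s(a, b) ∧ v ∈ f) (ha : a ∉ f) : b ∈ f := by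
  obtain ⟨v, hv, hvf⟩ := hmeet
  rcases Sym2.mem_iff.mp hv with rfl | rfl
  · exact absurd hvf ha
  · exact hvf

theorem exists_forall_mem_of_not_hasTriangle [Nonempty V] {E : Set (Sym2 V)}
    (hmeet : ∀ e ∈ E, ∀ f ∈ E, ∃ v, v ∈ e ∧ v ∈ f) (hE : ¬ HasTriangle E) :
    ∃ v, ∀ e ∈ E, v ∈ e := by
  by_contra! hstar
  obtain ⟨e, he, -⟩ := hstar (Classical.arbitrary V)
  induction e using Sym2.inductionOn with
  | hf a b =>
    obtain ⟨f, hf, haf⟩ := hstar a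
    obtain ⟨g, hg, hbg⟩ := hstar b
    have hbf := mem_of_exists_mem_mem_of_notMem (hmeet _ he _ hf) haf
    have hag := mem_of_exists_mem_mem_of_notMem (Sym2.eq_swap ▸ hmeet _ he _ hg) hbg
    obtain ⟨c, rfl⟩ := Sym2.mem_iff_exists.mp hbf
    obtain ⟨d, rfl⟩ := Sym2.mem_iff_exists.mp hag
    have hcd : c = d := by
      have hcg := mem_of_exists_mem_mem_of_notMem (hmeet _ hf _ hg) hbg
      rcases Sym2.mem_iff.mp hcg with rfl | rfl
      · exact absurd (Sym2.mem_mk_right _ _) haf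
      · rfl
    subst hcd
    refine hE ⟨a, b, c, ?_, ?_, ?_, he, hf, hg⟩
    · rintro rfl; exact haf hbf
    · rintro rfl; exact haf (Sym2.mem_mk_right _ _)
    · rintro rfl; exact hbg (Sym2.mem_mk_right _ _)

end Sym2

lemma Finset.exists_ne_notMem_notMem_of_card_add_two_le {α : Type*} [Fintype α] [DecidableEq α]
    (S : Finset α) (h : S.card + 2 ≤ Fintype.card α) : ∃ d e, d ≠ e ∧ d ∉ S ∧ e ∉ S := by
  have : 1 < Sᶜ.card := by rw [Finset.card_compl]; omega
  obtain ⟨d, hd, e, he, hde⟩ := Finset.one_lt_card.mp this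
  exact ⟨d, e, hde, Finset.mem_compl.mp hd, Finset.mem_compl.mp he⟩

theorem stmt5_general (Es : Fin 3 → Set (Sym2 (Fin 5)))
    (hcov : ∀ e : Sym2 (Fin 5), ¬ e.IsDiag → ∃ i, e ∈ Es i)
    (hshare : ∀ i, ∀ e ∈ Es i, ∀ f ∈ Es i, ∃ v, v ∈ e ∧ v ∈ f) :
    ∃ i, ∃ a b c : Fin 5, a ≠ b ∧ a ≠ c ∧ b ≠ c ∧
      s(a, b) ∈ Es i ∧ s(b, c) ∈ Es i ∧ s(a, c) ∈ Es i := by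
  by_contra hnone
  choose centre hcentre using fun i =>
    Sym2.exists_forall_mem_of_not_hasTriangle (hshare i) fun htri => hnone ⟨i, htri⟩
  have hcard : (Finset.univ.image centre).card + 2 ≤ Fintype.card (Fin 5) := by
    have := Finset.card_image_le (s := Finset.univ) (f := centre)
    simp only [Finset.card_univ, Fintype.card_fin] at this ⊢
    omega
  obtain ⟨d, e, hde, hd, he⟩ := Finset.exists_ne_notMem_notMem_of_card_add_two_le _ hcard
  obtain ⟨i, hi⟩ := hcov s(d, e) (by simpa using hde)
  rcases Sym2.mem_iff.mp (hcentre i _ hi) with h | h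
  · exact hd (h ▸ Finset.mem_image_of_mem centre (Finset.mem_univ i))
  · exact he (h ▸ Finset.mem_image_of_mem centre (Finset.mem_univ i))

theorem stmt5 (Es : Fin 3 → Set (Sym2 (Fin 5)))
    (hdiag : ∀ i, ∀ e ∈ Es i, ¬ e.IsDiag)
    (hcov : ∀ e : Sym2 (Fin 5), ¬ e.IsDiag → ∃ i, e ∈ Es i)
    (hshare : ∀ i, ∀ e ∈ Es i, ∀ f ∈ Es i, ∃ v, v ∈ e ∧ v ∈ f) :
    ∃ i, ∃ a b c : Fin 5, a ≠ b ∧ a ≠ c ∧ b ≠ c ∧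
      s(a, b) ∈ Es i ∧ s(b, c) ∈ Es i ∧ s(a, c) ∈ Es i :=
  stmt5_general Es hcov hshare
end

section
/- Let V be a finite-dimensional vector space over F_2 and write G = V \ {0}. Let (P, Q, R) be a partition of G such that no triangle T = {a, b, a+b} ⊆ G satisfies both |T ∩ P| ≥ 1 and |T ∩ R| = 1. Then, letting S = span(P), we have S \ {0} ⊆ P ∪ Q, and every coset x + S of S in V with x ∉ S is entirely contained in Q or entirely contained in R. -/
/-!
Call `s` a period of `R` if `v + s ∈ R ↔ v ∈ R` for every `v`. The periods of a set form an
additive subgroup, hence (over `ZMod n`) a submodule. The triangle condition applied to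
`{p, v, p + v}` with `p ∈ P` says exactly that every element of `P` is a period of `R`, so every
element of `S = span P` is one. Taking `v = 0` shows that `S` misses `R`, and each coset `x + S`
lies inside `R` or inside its complement; outside `S`, every vector not in `R` is in `Q`.
-/

open Submodule

section Periods

variable {V : Type*} [AddCommGroup V]

def periods (R : Set V) : AddSubgroup V where
  carrier := {s | ∀ v, v + s ∈ R ↔ v ∈ R}
  zero_mem' := by simp
  add_mem' {s t} hs ht v := by rw [← add_assoc, ht, hs]
  neg_mem' {s} hs v := by rw [← hs, neg_add_cancel_right]

theorem mem_periods {R : Set V} {s : V} : s ∈ periods R ↔ ∀ v, v + s ∈ R ↔ v ∈ R := Iff.rfl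

theorem mem_periods_of_mem_span {n : ℕ} [Module (ZMod n) V] {P R : Set V}
    (hP : P ⊆ periods R) {s : V} (hs : s ∈ span (ZMod n) P) : s ∈ periods R :=
  (span_le (p := AddSubgroup.toZModSubmodule n (periods R))).mpr hP hs

end Periods

theorem triple_inter_eq_singleton {V : Type*} {R : Set V} {a b c : V}
    (ha : a ∉ R) (hb : b ∈ R) (hc : c ∉ R) : ({a, b, c} : Set V) ∩ R = {b} := by
  ext x
  simp only [Set.mem_inter_iff, Set.mem_insert_iff, Set.mem_singleton_iff]
  constructor
  · rintro ⟨rfl | rfl | rfl, hx⟩ <;> tauto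
  · rintro rfl
    tauto

theorem ncard_triple_inter_eq_one {V : Type*} {R : Set V} {a b c : V}
    (ha : a ∉ R) (hbc : b ∈ R ↔ c ∉ R) : (({a, b, c} : Set V) ∩ R).ncard = 1 := by
  by_cases hb : b ∈ R
  · rw [triple_inter_eq_singleton ha hb (hbc.mp hb), Set.ncard_singleton]
  · rw [Set.pair_comm, triple_inter_eq_singleton ha (by tauto) hb, Set.ncard_singleton]

section Triangles

variable {V : Type*} [AddCommGroup V] [Module (ZMod 2) V] {P Q R : Set V}

theorem mem_periods_of_triangle_free (hP0 : (0 : V) ∉ P) (hR0 : (0 : V) ∉ R)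
    (hPR : Disjoint P R)
    (htri : ∀ a b : V, a ≠ 0 → b ≠ 0 → a ≠ b →
      ¬ (((({a, b, a + b} : Set V)) ∩ P).Nonempty ∧
          ((({a, b, a + b} : Set V)) ∩ R).ncard = 1))
    {p : V} (hp : p ∈ P) : p ∈ periods R := by
  have hpR : p ∉ R := hPR.notMem_of_mem_left hp
  refine mem_periods.mpr fun v => ?_
  by_cases hv0 : v = 0
  · simp [hv0, hpR, hR0]
  by_cases hvp : v = p
  · simp [hvp, ZModModule.add_self, hpR, hR0]
  have hp0 : p ≠ 0 := fun h => hP0 (h ▸ hp)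
  have hcard : (({p, v, p + v} : Set V) ∩ R).ncard ≠ 1 := fun h =>
    htri p v hp0 hv0 (Ne.symm hvp) ⟨⟨p, by simp, hp⟩, h⟩
  have := mt (ncard_triple_inter_eq_one hpR) hcard
  rw [add_comm]
  tauto

theorem mem_of_notMem_span (hunion : P ∪ Q ∪ R = {v : V | v ≠ 0})
    {v : V} (hvS : v ∉ span (ZMod 2) P) (hvR : v ∉ R) : v ∈ Q := by
  have hv : v ∈ P ∪ Q ∪ R := by
    rw [hunion]
    exact fun h => hvS (h ▸ zero_mem _)
  rcases hv with (hvP | hvQ) | hvR'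
  · exact absurd (subset_span hvP) hvS
  · exact hvQ
  · exact absurd hvR' hvR

end Triangles

theorem stmt7_general {V : Type*} [AddCommGroup V] [Module (ZMod 2) V]
    (P Q R : Set V)
    (hunion : P ∪ Q ∪ R = {v : V | v ≠ 0})
    (hPR : Disjoint P R)
    (htri : ∀ a b : V, a ≠ 0 → b ≠ 0 → a ≠ b →
      ¬ (((({a, b, a + b} : Set V)) ∩ P).Nonempty ∧
          ((({a, b, a + b} : Set V)) ∩ R).ncard = 1)) :
    ((span (ZMod 2) P : Set V) \ {0} ⊆ P ∪ Q) ∧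
    ∀ x : V, x ∉ span (ZMod 2) P →
      ((x + ·) '' (span (ZMod 2) P : Set V) ⊆ Q ∨
        (x + ·) '' (span (ZMod 2) P : Set V) ⊆ R) := by
  have hne : ∀ {v : V}, v ∈ P ∪ Q ∪ R → v ≠ 0 := fun hv => by rwa [hunion] at hv
  have hP0 : (0 : V) ∉ P := fun h => hne (Or.inl (Or.inl h)) rfl
  have hR0 : (0 : V) ∉ R := fun h => hne (Or.inr h) rfl
  have hS : ∀ {s : V}, s ∈ span (ZMod 2) P → s ∈ periods R := mem_periods_of_mem_span
    fun _ hp => mem_periods_of_triangle_free hP0 hR0 hPR htri hp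
  refine ⟨fun s ⟨hs, hs0⟩ => ?_, fun x hx => ?_⟩
  · have hsR : s ∉ R := by simpa [hR0] using mem_periods.mp (hS hs) 0
    have hs' : s ∈ P ∪ Q ∪ R := by rw [hunion]; exact hs0
    exact hs'.resolve_right hsR
  have hcoset : ∀ s ∈ span (ZMod 2) P, (x + s ∈ R ↔ x ∈ R) ∧ x + s ∉ span (ZMod 2) P :=
    fun s hs => ⟨mem_periods.mp (hS hs) x, fun hxs => hx (by simpa using sub_mem hxs hs)⟩
  by_cases hxR : x ∈ R
  · exact Or.inr fun _ ⟨s, hs, hy⟩ => hy ▸ (hcoset s hs).1.mpr hxR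
  · exact Or.inl fun _ ⟨s, hs, hy⟩ =>
      hy ▸ mem_of_notMem_span hunion (hcoset s hs).2 ((hcoset s hs).1.not.mpr hxR)

theorem stmt7 {V : Type*} [AddCommGroup V] [Module (ZMod 2) V]
    [FiniteDimensional (ZMod 2) V] (P Q R : Set V)
    (hunion : P ∪ Q ∪ R = {v : V | v ≠ 0})
    (hPQ : Disjoint P Q) (hPR : Disjoint P R) (hQR : Disjoint Q R)
    (htri : ∀ a b : V, a ≠ 0 → b ≠ 0 → a ≠ b →
      ¬ (((({a, b, a + b} : Set V)) ∩ P).Nonempty ∧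
          ((({a, b, a + b} : Set V)) ∩ R).ncard = 1)) :
    ((span (ZMod 2) P : Set V) \ {0} ⊆ P ∪ Q) ∧
    ∀ x : V, x ∉ span (ZMod 2) P →
      ((x + ·) '' (span (ZMod 2) P : Set V) ⊆ Q ∨
        (x + ·) '' (span (ZMod 2) P : Set V) ⊆ R) :=
  stmt7_general P Q R hunion hPR htri
end

section
/- Let r ≥ 1 and let E be a subset of F_2^r \ {0} that spans F_2^r and is I_3-free (claw-free). Then |E| ≥ 2^(⌊r/2⌋) + 2^(⌈r/2⌉) − 2. -/
open Submodule

abbrev V2 (r : ℕ) := Fin r → ZMod 2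

def TriangleFree {r : ℕ} (E : Set (V2 r)) : Prop :=
  ∀ a ∈ E, ∀ b ∈ E, a + b ∉ E

/-- `E` has no induced `I_n`: no `n`-dimensional subspace `W` such that `E ∩ W` is a
basis of `W`. -/
def IFree {r : ℕ} (n : ℕ) (E : Set (V2 r)) : Prop :=
  ¬ ∃ S : Finset (V2 r), S.card = n ∧
      LinearIndependent (ZMod 2) (Subtype.val : ↥(S : Set (V2 r)) → V2 r) ∧
      E ∩ (span (ZMod 2) (S : Set (V2 r)) : Set (V2 r)) = (S : Set (V2 r))

/-!
Take a subspace `W` of `V = 𝔽₂ʳ` maximal among those with `W \ {0} ⊆ E`. If `y, z ∈ E` lie in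
distinct nonzero classes mod `W` but `y + z + W` misses `E`, claw-freeness puts `y + w` or
`z + w` in `E` for every `w ∈ W`, and maximality of `W` then yields a claw `y + a, z + b, a + b`
with `a, b ∈ W`. So the image of `E` in `V / W`, together with `0`, is closed under addition;
as `E` spans, it is all of `V / W`. Counting `E ∩ W` and `E \ W` gives
`|E| ≥ (2^d - 1) + (2^(r-d) - 1)` with `d = dim W`, and `2^d + 2^(r-d)` is smallest when `d`
and `r - d` are balanced.
-/

theorem zmod2_eq_zero_or_eq_one (c : ZMod 2) : c = 0 ∨ c = 1 := by
  decide +revert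

section ZModTwo

variable {V : Type*} [AddCommGroup V] [Module (ZMod 2) V]

theorem ZModModule.add_eq_zero_iff_eq {x y : V} : x + y = 0 ↔ x = y := by
  rw [add_eq_zero_iff_eq_neg, ZModModule.neg_eq_self]

theorem mem_span_insert_zmod2 {x v : V} {s : Set V} :
    v ∈ span (ZMod 2) (insert x s) ↔ v ∈ span (ZMod 2) s ∨ v + x ∈ span (ZMod 2) s := by
  rw [mem_span_insert]
  constructor
  · rintro ⟨a, w, hw, rfl⟩
    rcases zmod2_eq_zero_or_eq_one a with rfl | rfl
    · simpa using Or.inl hw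
    · simpa [add_comm x, add_assoc, ZModModule.add_self] using Or.inr hw
  · rintro (h | h)
    · exact ⟨0, v, h, by simp⟩
    · exact ⟨1, v + x, h, by simp [add_comm x, add_assoc, ZModModule.add_self]⟩

theorem mem_span_singleton_zmod2 {x v : V} : v ∈ span (ZMod 2) {x} ↔ v = 0 ∨ v = x := by
  rw [mem_span_singleton]
  constructor
  · rintro ⟨a, rfl⟩
    rcases zmod2_eq_zero_or_eq_one a with rfl | rfl <;> simp
  · rintro (rfl | rfl)
    exacts [⟨0, zero_smul _ _⟩, ⟨1, one_smul _ _⟩]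

theorem mem_span_pair_zmod2 {x y v : V} :
    v ∈ span (ZMod 2) {x, y} ↔ v = 0 ∨ v = x ∨ v = y ∨ v = x + y := by
  simp only [mem_span_insert_zmod2, mem_span_singleton_zmod2,
    ← eq_sub_iff_add_eq, ZModModule.sub_eq_add]
  grind

theorem coe_span_triple_zmod2 {x y z : V} :
    (span (ZMod 2) {x, y, z} : Set V) = {0, x, y, z, x + y, x + z, y + z, x + y + z} := by
  ext v
  simp only [SetLike.mem_coe, mem_span_insert_zmod2, mem_span_singleton_zmod2,
    ← eq_sub_iff_add_eq, ZModModule.sub_eq_add, Set.mem_insert_iff, Set.mem_singleton_iff]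
  grind

theorem linearIndepOn_id_triple_zmod2 {x y z : V} (hx : x ≠ 0) (hy : y ≠ 0) (hz : z ≠ 0)
    (hxy : x ≠ y) (hxz : x ≠ z) (hyz : y ≠ z) (hxyz : x + y + z ≠ 0) :
    LinearIndepOn (ZMod 2) id {x, y, z} := by
  simp only [linearIndepOn_id_insert_iff, mem_span_pair_zmod2, mem_span_singleton_zmod2]
  refine ⟨⟨.singleton hz, ?_⟩, ?_⟩
  · grind
  · have := ZModModule.add_self y
    have := ZModModule.add_self z
    grind

theorem inter_span_triple_zmod2 {E : Set V} (h0 : (0 : V) ∉ E) {x y z : V}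
    (hx : x ∈ E) (hy : y ∈ E) (hz : z ∈ E) (hxy : x + y ∉ E) (hxz : x + z ∉ E) (hyz : y + z ∉ E)
    (hxyz : x + y + z ∉ E) : E ∩ span (ZMod 2) {x, y, z} = {x, y, z} := by
  rw [coe_span_triple_zmod2]
  ext v
  simp only [Set.mem_inter_iff, Set.mem_insert_iff, Set.mem_singleton_iff]
  constructor
  · rintro ⟨hv, rfl | rfl | rfl | rfl | rfl | rfl | rfl | rfl⟩ <;> tauto
  · rintro (rfl | rfl | rfl) <;> tauto

theorem coe_span_zmod2_subset_insert_zero {S : Set V}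
    (hadd : ∀ x ∈ S, ∀ y ∈ S, x + y ∈ insert 0 S) : (span (ZMod 2) S : Set V) ⊆ insert 0 S := by
  intro v hv
  induction hv using span_induction with
  | mem x hx => exact Or.inr hx
  | zero => exact Or.inl rfl
  | add x y _ _ hx hy =>
    rcases hx with rfl | hx
    · rwa [zero_add]
    rcases hy with rfl | hy
    · rw [add_zero]; exact Or.inr hx
    exact hadd x hx y hy
  | smul a x _ hx =>
    rcases zmod2_eq_zero_or_eq_one a with rfl | rfl
    · exact Or.inl (zero_smul _ x)
    · rwa [one_smul]

variable {E : Set V} {W : Submodule (ZMod 2) V}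

theorem exists_add_notMem_of_maximal
    (hW : Maximal (fun U : Submodule (ZMod 2) V => (U : Set V) \ {0} ⊆ E) W)
    {y : V} (hyW : y ∉ W) : ∃ w ∈ W, y + w ∉ E := by
  by_contra! h
  have hbigger : (span (ZMod 2) (insert y (W : Set V)) : Set V) \ {0} ⊆ E := by
    rintro v ⟨hv, hv0⟩
    rcases mem_span_insert_zmod2.1 hv with hv | hv
    · exact hW.1 ⟨by simpa using hv, hv0⟩
    · have hvy : y + (v + y) = v := by
        rw [add_comm, add_assoc, ZModModule.add_self, add_zero]
      exact hvy ▸ h _ (by simpa using hv)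
  have hle := hW.2 hbigger fun w hw => subset_span (Set.mem_insert_of_mem y hw)
  exact hyW (hle (subset_span (Set.mem_insert y _)))

end ZModTwo

section V2

variable {r : ℕ} {E : Set (V2 r)} {W : Submodule (ZMod 2) (V2 r)}

theorem IFree.add_mem_or (hI3 : IFree 3 E) (h0 : (0 : V2 r) ∉ E)
    {x y z : V2 r} (hx : x ∈ E) (hy : y ∈ E) (hz : z ∈ E)
    (hxy : x ≠ y) (hxz : x ≠ z) (hyz : y ≠ z) :
    x + y ∈ E ∨ x + z ∈ E ∨ y + z ∈ E ∨ x + y + z ∈ E := by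
  by_contra! h
  obtain ⟨hxy', hxz', hyz', hxyz'⟩ := h
  have hxyz : x + y + z ≠ 0 := fun h => hxy' (ZModModule.add_eq_zero_iff_eq.1 h ▸ hz)
  refine hI3 ⟨{x, y, z}, Finset.card_eq_three.2 ⟨x, y, z, hxy, hxz, hyz, rfl⟩, ?_, ?_⟩
  · change LinearIndepOn (ZMod 2) id (({x, y, z} : Finset (V2 r)) : Set (V2 r))
    push_cast
    exact linearIndepOn_id_triple_zmod2 (ne_of_mem_of_not_mem hx h0) (ne_of_mem_of_not_mem hy h0)
      (ne_of_mem_of_not_mem hz h0) hxy hxz hyz hxyz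
  · push_cast
    exact inter_span_triple_zmod2 h0 hx hy hz hxy' hxz' hyz' hxyz'

theorem IFree.exists_add_add_mem_of_maximal (hI3 : IFree 3 E) (h0 : (0 : V2 r) ∉ E)
    (hW : Maximal (fun U : Submodule (ZMod 2) (V2 r) => (U : Set (V2 r)) \ {0} ⊆ E) W)
    {y z : V2 r} (hy : y ∈ E) (hz : z ∈ E) (hyW : y ∉ W) (hzW : z ∉ W) (hyzW : y + z ∉ W) :
    ∃ w ∈ W, y + z + w ∈ E := by
  by_contra! hyz
  have hyz0 : y + z ∉ E := by simpa using hyz 0 W.zero_mem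
  have hWE : ∀ w ∈ W, w ≠ 0 → w ∈ E := fun w hw hw0 => hW.1 ⟨hw, hw0⟩
  have hsplit : ∀ w ∈ W, y + w ∈ E ∨ z + w ∈ E := by
    intro w hw
    rcases eq_or_ne w 0 with rfl | hw0
    · simpa using Or.inl hy
    have hyz_ne : y ≠ z := fun h => hyzW (ZModModule.add_eq_zero_iff_eq.2 h ▸ W.zero_mem)
    rcases hI3.add_mem_or h0 hy hz (hWE w hw hw0) hyz_ne (fun h => hyW (h ▸ hw))
      (fun h => hzW (h ▸ hw)) with h | h | h | h
    exacts [absurd h hyz0, .inl h, .inr h, absurd h (hyz w hw)]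
  obtain ⟨a, ha, hza⟩ := exists_add_notMem_of_maximal hW hzW
  obtain ⟨b, hb, hyb⟩ := exists_add_notMem_of_maximal hW hyW
  have hya : y + a ∈ E := (hsplit a ha).resolve_right hza
  have hzb : z + b ∈ E := (hsplit b hb).resolve_left hyb
  have hab : a + b ∈ E :=
    hWE _ (add_mem ha hb) fun h => hyb (ZModModule.add_eq_zero_iff_eq.1 h ▸ hya)
  have hne₁ : y + a ≠ z + b := fun h => hyzW <| by
    have h' := ZModModule.add_eq_zero_iff_eq.2 h
    rw [add_add_add_comm, ZModModule.add_eq_zero_iff_eq] at h'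
    exact h' ▸ add_mem ha hb
  have hne₂ : y + a ≠ a + b := fun h => hyW (add_right_cancel (h.trans (add_comm a b)) ▸ hb)
  have hne₃ : z + b ≠ a + b := fun h => hzW (add_right_cancel h ▸ ha)
  rcases hI3.add_mem_or h0 hya hzb hab hne₁ hne₂ hne₃ with h | h | h | h
  · rw [add_add_add_comm] at h
    exact hyz _ (add_mem ha hb) h
  · rw [ZModModule.add_add_add_cancel] at h
    exact hyb h
  · rw [add_comm a b, ZModModule.add_add_add_cancel] at h
    exact hza h
  · rw [add_add_add_comm y, add_assoc, ZModModule.add_self, add_zero] at h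
    exact hyz0 h

theorem IFree.compl_zero_subset_mkQ_image_of_maximal (hI3 : IFree 3 E) (h0 : (0 : V2 r) ∉ E)
    (hspan : span (ZMod 2) E = ⊤)
    (hW : Maximal (fun U : Submodule (ZMod 2) (V2 r) => (U : Set (V2 r)) \ {0} ⊆ E) W) :
    ({0}ᶜ : Set (V2 r ⧸ W)) ⊆ W.mkQ '' E := by
  have hclosed : ∀ p ∈ W.mkQ '' E, ∀ p' ∈ W.mkQ '' E, p + p' ∈ insert 0 (W.mkQ '' E) := by
    rintro _ ⟨y, hy, rfl⟩ _ ⟨z, hz, rfl⟩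
    by_cases hyW : y ∈ W
    · exact .inr ⟨z, hz, by simp [(Quotient.mk_eq_zero W).2 hyW]⟩
    by_cases hzW : z ∈ W
    · exact .inr ⟨y, hy, by simp [(Quotient.mk_eq_zero W).2 hzW]⟩
    by_cases hyzW : y + z ∈ W
    · exact .inl ((Quotient.mk_eq_zero W).2 hyzW)
    obtain ⟨w, hw, hyzw⟩ := hI3.exists_add_add_mem_of_maximal h0 hW hy hz hyW hzW hyzW
    exact .inr ⟨y + z + w, hyzw, by simp [(Quotient.mk_eq_zero W).2 hw]⟩
  have htop : span (ZMod 2) (W.mkQ '' E) = ⊤ := by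
    rw [span_image, hspan, Submodule.map_top, range_mkQ]
  intro q hq
  exact (coe_span_zmod2_subset_insert_zero hclosed (htop ▸ mem_top : q ∈ _)).resolve_left hq

end V2

theorem card_sub_one_add_card_quotient_sub_one_le_ncard {R V : Type*} [Ring R] [AddCommGroup V]
    [Module R V] [Finite V] {E : Set V} {W : Submodule R V} (hWE : (W : Set V) \ {0} ⊆ E)
    (hE : ({0}ᶜ : Set (V ⧸ W)) ⊆ W.mkQ '' E) :
    Nat.card W - 1 + (Nat.card (V ⧸ W) - 1) ≤ E.ncard := by
  have : Finite (V ⧸ W) := .of_surjective _ W.mkQ_surjective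
  have hin : Nat.card W - 1 ≤ (E ∩ W).ncard := calc
    Nat.card W - 1 = ((W : Set V) \ {0}).ncard := by
      rw [Set.ncard_sdiff_singleton_of_mem W.zero_mem, ← Nat.card_coe_set_eq, SetLike.coe_sort_coe]
    _ ≤ (E ∩ W).ncard := Set.ncard_le_ncard fun v hv => ⟨hWE hv, hv.1⟩
  have hout : Nat.card (V ⧸ W) - 1 ≤ (E \ W).ncard := calc
    Nat.card (V ⧸ W) - 1 = ({0}ᶜ : Set (V ⧸ W)).ncard := by
      rw [Set.ncard_compl, Set.ncard_singleton]
    _ ≤ (W.mkQ '' (E \ W)).ncard := Set.ncard_le_ncard fun q hq => by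
      obtain ⟨v, hv, rfl⟩ := hE hq
      exact ⟨v, ⟨hv, fun hvW => hq ((Quotient.mk_eq_zero W).2 hvW)⟩, rfl⟩
    _ ≤ (E \ W).ncard := Set.ncard_image_le (Set.toFinite _)
  rw [← Set.ncard_inter_add_ncard_sdiff_eq_ncard E W]
  omega

theorem two_pow_add_two_pow_le_of_le {a b m n : ℕ} (ham : a ≤ m) (hmn : m ≤ n)
    (hsum : m + n = a + b) : 2 ^ m + 2 ^ n ≤ 2 ^ a + 2 ^ b := by
  obtain ⟨k, rfl⟩ := Nat.exists_eq_add_of_le ham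
  obtain rfl : b = n + k := by omega
  have han : 2 ^ a ≤ 2 ^ n := Nat.pow_le_pow_right two_pos (ham.trans hmn)
  have hk : 1 ≤ 2 ^ k := Nat.one_le_two_pow
  rw [pow_add, pow_add]
  nlinarith

theorem two_pow_half_add_le {r d : ℕ} (hd : d ≤ r) :
    2 ^ (r / 2) + 2 ^ ((r + 1) / 2) ≤ 2 ^ d + 2 ^ (r - d) := by
  wlog hdr : d ≤ r - d generalizing d
  · simpa [Nat.sub_sub_self hd, add_comm] using this (Nat.sub_le r d) (by omega)
  exact two_pow_add_two_pow_le_of_le (by omega) (by omega) (by omega)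

theorem stmt8_general {r : ℕ} (E : Set (V2 r)) (h0 : (0 : V2 r) ∉ E)
    (hspan : span (ZMod 2) E = ⊤) (hI3 : IFree 3 E) :
    2 ^ (r / 2) + 2 ^ ((r + 1) / 2) - 2 ≤ E.ncard := by
  obtain ⟨W, -, hW⟩ := _root_.Finite.exists_le_maximal
    (p := fun U : Submodule (ZMod 2) (V2 r) => (U : Set (V2 r)) \ {0} ⊆ E) (a := ⊥) (by simp)
  have hcount := card_sub_one_add_card_quotient_sub_one_le_ncard hW.1
    (hI3.compl_zero_subset_mkQ_image_of_maximal h0 hspan hW)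
  set d := Module.finrank (ZMod 2) W
  have hdim : Module.finrank (ZMod 2) (V2 r ⧸ W) + d = r := by
    simpa using W.finrank_quotient_add_finrank
  have hW_card : Nat.card W = 2 ^ d := by
    rw [Module.natCard_eq_pow_finrank (K := ZMod 2), Nat.card_zmod]
  have hQ_card : Nat.card (V2 r ⧸ W) = 2 ^ (r - d) := by
    rw [Module.natCard_eq_pow_finrank (K := ZMod 2), Nat.card_zmod]
    congr 1
    omega
  have hpow := two_pow_half_add_le (by omega : d ≤ r)
  have := Nat.one_le_two_pow (n := d)
  have := Nat.one_le_two_pow (n := r - d)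
  omega

theorem stmt8 {r : ℕ} (hr : 1 ≤ r) (E : Set (V2 r)) (h0 : (0 : V2 r) ∉ E)
    (hspan : span (ZMod 2) E = ⊤) (hI3 : IFree 3 E) :
    2 ^ (r / 2) + 2 ^ ((r + 1) / 2) - 2 ≤ E.ncard :=
  stmt8_general E h0 hspan hI3
end

section
/- Let E be a spanning subset of F_2^r \ {0} that is both I_3-free and triangle-free. Then E is the complement of a hyperplane: there exists a linear functional f : F_2^r → F_2 with E = {v ∈ F_2^r : f(v) = 1}. -/
open Submodule

/-! Triangle-freeness and `I_3`-freeness force `a + b + c ∈ E` for all `a, b, c ∈ E`: otherwise,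
for distinct `a, b, c`, the set `{a, b, c}` would be an induced `I_3`. Over `𝔽₂` this closure
property says that `E` is an affine subspace `e + D`; as `0 ∉ E` and `E` spans, `D` is a hyperplane
not containing `e`, and a functional vanishing on `D` with value `1` at `e` cuts out `E`. -/

lemma zmod_two_eq_zero_or_one (k : ZMod 2) : k = 0 ∨ k = 1 := by decide +revert

section ZModTwoModule

variable {M : Type*} [AddCommGroup M] [Module (ZMod 2) M]

lemma mem_span_insert_zmod_two {a x : M} {s : Set M} :
    x ∈ span (ZMod 2) (insert a s) ↔ x ∈ span (ZMod 2) s ∨ x - a ∈ span (ZMod 2) s := by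
  rw [mem_span_insert', ZModModule.sub_eq_add]
  constructor
  · rintro ⟨k, hk⟩
    obtain rfl | rfl := zmod_two_eq_zero_or_one k
    · exact .inl (by simpa using hk)
    · exact .inr (by simpa using hk)
  · rintro (h | h)
    · exact ⟨0, by simpa using h⟩
    · exact ⟨1, by simpa using h⟩

lemma mem_span_singleton_zmod_two {a x : M} : x ∈ span (ZMod 2) {a} ↔ x = 0 ∨ x = a := by
  simpa [sub_eq_zero] using mem_span_insert_zmod_two (a := a) (x := x) (s := ∅)

lemma mem_span_pair_zmod_two {a b x : M} :
    x ∈ span (ZMod 2) {a, b} ↔ x = 0 ∨ x = a ∨ x = b ∨ x = a + b := by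
  rw [mem_span_insert_zmod_two, mem_span_singleton_zmod_two, mem_span_singleton_zmod_two,
    sub_eq_zero, sub_eq_iff_eq_add]
  grind

lemma mem_span_triple_zmod_two {a b c x : M} :
    x ∈ span (ZMod 2) {a, b, c} ↔
      x = 0 ∨ x = a ∨ x = b ∨ x = c ∨ x = a + b ∨ x = a + c ∨ x = b + c ∨ x = a + b + c := by
  rw [mem_span_insert_zmod_two, mem_span_pair_zmod_two, mem_span_pair_zmod_two]
  simp only [sub_eq_iff_eq_add]
  grind

lemma linearIndepOn_id_triple_zmod_two {a b c : M} (ha : a ≠ 0) (hb : b ≠ 0) (hc : c ≠ 0)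
    (hab : a ≠ b) (hac : a ≠ c) (hbc : b ≠ c) (habc : a ≠ b + c) :
    LinearIndepOn (ZMod 2) id ({a, b, c} : Set M) := by
  refine .id_insert (.id_insert ((linearIndepOn_singleton_iff _).2 hc) ?_) ?_
  · rw [mem_span_singleton_zmod_two]; tauto
  · rw [mem_span_pair_zmod_two]; tauto

lemma Submodule.exists_dual_eq_one_iff_sub_mem {D : Submodule (ZMod 2) M} {e : M} (he : e ∉ D)
    (hcover : ∀ v, v ∈ D ∨ v - e ∈ D) :
    ∃ f : M →ₗ[ZMod 2] ZMod 2, ∀ v, f v = 1 ↔ v - e ∈ D := by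
  obtain ⟨f, hfe_ne, hfD⟩ := D.exists_dual_map_eq_bot_of_notMem he inferInstance
  have hf : ∀ d ∈ D, f d = 0 := fun d hd => LinearMap.le_ker_iff_map.2 hfD hd
  have hfe : f e = 1 := (zmod_two_eq_zero_or_one _).resolve_left hfe_ne
  refine ⟨f, fun v => ⟨fun hv => ?_, fun hv => ?_⟩⟩
  · refine (hcover v).resolve_left fun hvD => ?_
    simp [hf v hvD] at hv
  · rw [← hfe, ← sub_eq_zero, ← map_sub]
    exact hf _ hv

def affineSubspaceOfAddAddMem (E : Set M) (hE : ∀ a ∈ E, ∀ b ∈ E, ∀ c ∈ E, a + b + c ∈ E) :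
    AffineSubspace (ZMod 2) M where
  carrier := E
  smul_vsub_vadd_mem' k a b c ha hb hc := by
    obtain rfl | rfl := zmod_two_eq_zero_or_one k
    · simpa using hc
    · simpa [ZModModule.sub_eq_add] using hE a ha b hb c hc

lemma AffineSubspace.mem_direction_or_sub_mem_direction_of_mem_span
    {A : AffineSubspace (ZMod 2) M} {e v : M} (he : e ∈ A) (hv : v ∈ span (ZMod 2) (A : Set M)) :
    v ∈ A.direction ∨ v - e ∈ A.direction := by
  have hle : span (ZMod 2) (A : Set M) ≤ span (ZMod 2) (insert e A.direction) := by
    refine span_le.2 fun a ha => mem_span_insert_zmod_two.2 (.inr (subset_span ?_))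
    exact AffineSubspace.vsub_mem_direction ha he
  simpa only [mem_span_insert_zmod_two, span_eq] using hle hv

end ZModTwoModule

lemma TriangleFree.add_add_mem {r : ℕ} {E : Set (V2 r)} (hTF : TriangleFree E)
    (h0 : (0 : V2 r) ∉ E) (hI3 : IFree 3 E) {a b c : V2 r} (ha : a ∈ E) (hb : b ∈ E)
    (hc : c ∈ E) : a + b + c ∈ E := by
  by_cases hab : a = b
  · rwa [hab, ZModModule.add_self, zero_add]
  by_cases hac : a = c
  · rwa [hac, add_right_comm, ZModModule.add_self, zero_add]
  by_cases hbc : b = c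
  · rwa [hbc, add_assoc, ZModModule.add_self, add_zero]
  by_contra habc
  have hne : ∀ x ∈ E, x ≠ 0 := fun x hx h => h0 (h ▸ hx)
  refine hI3 ⟨{a, b, c}, Finset.card_eq_three.2 ⟨a, b, c, hab, hac, hbc, rfl⟩, ?_, ?_⟩
  · show LinearIndepOn (ZMod 2) id (({a, b, c} : Finset (V2 r)) : Set (V2 r))
    push_cast
    exact linearIndepOn_id_triple_zmod_two (hne a ha) (hne b hb) (hne c hc) hab hac hbc
      fun h => hTF b hb c hc (h ▸ ha)
  · ext x
    push_cast
    simp only [Set.mem_inter_iff, SetLike.mem_coe, mem_span_triple_zmod_two]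
    constructor
    · rintro ⟨hx, rfl | rfl | rfl | rfl | rfl | rfl | rfl | rfl⟩
      exacts [absurd hx h0, by simp, by simp, by simp, absurd hx (hTF a ha b hb),
        absurd hx (hTF a ha c hc), absurd hx (hTF b hb c hc), absurd hx habc]
    · rintro (rfl | rfl | rfl)
      exacts [⟨ha, by simp⟩, ⟨hb, by simp⟩, ⟨hc, by simp⟩]

theorem stmt9 {r : ℕ} (E : Set (V2 r)) (h0 : (0 : V2 r) ∉ E)
    (hspan : span (ZMod 2) E = ⊤) (hTF : TriangleFree E) (hI3 : IFree 3 E) :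
    ∃ f : V2 r →ₗ[ZMod 2] ZMod 2, E = {v : V2 r | f v = 1} := by
  rcases E.eq_empty_or_nonempty with rfl | ⟨e, he⟩
  · exact ⟨0, by simp⟩
  let A := affineSubspaceOfAddAddMem E fun a ha b hb c hc => hTF.add_add_mem h0 hI3 ha hb hc
  have hA : ∀ v, v - e ∈ A.direction ↔ v ∈ E := fun v => A.vsub_right_mem_direction_iff_mem he v
  have he_dir : e ∉ A.direction := fun h => h0 ((hA 0).1 (by simpa using h))
  obtain ⟨f, hf⟩ := A.direction.exists_dual_eq_one_iff_sub_mem he_dir fun v =>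
    A.mem_direction_or_sub_mem_direction_of_mem_span he
      (show v ∈ span (ZMod 2) E from hspan ▸ mem_top)
  exact ⟨f, Set.ext fun v => (hA v).symm.trans (hf v).symm⟩
end

section
/- Let E ⊆ F_2^7 \ {0} be triangle-free, I_5-free, and C_5-free, and let H be a 6-dimensional subspace such that E ∩ H is an induced 6-circuit (six distinct vectors v_1,...,v_6 with v_1+...+v_6 = 0, any five linearly independent, E ∩ H = {v_1,...,v_6}). If E \ H is nonempty, then |E \ H| ≥ 4. -/
/-!
Fix `x ∈ E \ H`. For each of the fifteen 4-subsets `A` of the circuit `S`, the five vectors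
`A ∪ {x}` are independent (`span A ≤ H`), so `I₅`-freeness gives a point of `E` in their span
outside `A ∪ {x}`. Independence of the 5-subsets of `S` rules out a point of `span A`, so that
point is `z = x + w` with `w ∈ span A`: some `z ∈ E \ H`, `z ≠ x`, has `x + z ∈ span A`.
By triangle-freeness `d = x + z` is a nonzero vector outside `E`. Such a `d ∈ span S` is `∑ I`
for some `I ⊆ S`, unique up to complement and with `2 ≤ |I| ≤ 4`, and `d ∈ span A` forces
`I ⊆ A` or `S \ I ⊆ A`; at most 7 of the 4-subsets do this. Hence `15 ≤ 7 * |E \ H \ {x}|`.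
-/

open Submodule

/-- `E` has no induced `n`-circuit: no `(n-1)`-dimensional subspace `F` with `E ∩ F`
equal to `n` distinct vectors summing to zero, any `n - 1` of which are linearly
independent. -/
def CircFree {r : ℕ} (n : ℕ) (E : Set (V2 r)) : Prop :=
  ¬ ∃ (F : Submodule (ZMod 2) (V2 r)) (S : Finset (V2 r)),
      Module.finrank (ZMod 2) F = n - 1 ∧ S.card = n ∧
      (S : Set (V2 r)) ⊆ (F : Set (V2 r)) ∧ (∑ x ∈ S, x) = 0 ∧
      (∀ T ⊆ S, T.card = n - 1 →
        LinearIndependent (ZMod 2) (Subtype.val : ↥(T : Set (V2 r)) → V2 r)) ∧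
      E ∩ (F : Set (V2 r)) = (S : Set (V2 r))

open Finset
open scoped symmDiff

theorem LinearIndepOn.eq_empty_of_sum_eq_zero {R V : Type*} [Ring R] [Nontrivial R]
    [AddCommGroup V] [Module R V] {T : Set V} (hT : LinearIndepOn R id T) {K : Finset V}
    (hK : (K : Set V) ⊆ T) (h : ∑ x ∈ K, x = 0) : K = ∅ :=
  eq_empty_of_forall_notMem fun _ hv ↦
    one_ne_zero (linearIndepOn_iff'.mp hT K (fun _ ↦ 1) hK (by simpa using h) _ hv)

theorem Finset.two_le_card_of_sum_eq {M : Type*} [AddCommMonoid M] {J : Finset M} {d : M}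
    (h : ∑ x ∈ J, x = d) (hd0 : d ≠ 0) (hdJ : d ∉ J) : 2 ≤ #J := by
  by_contra! hJ
  interval_cases hcard : #J
  · simp_all [card_eq_zero.mp hcard, eq_comm]
  · obtain ⟨a, rfl⟩ := card_eq_one.mp hcard
    simp_all

section ZModTwo

variable {V : Type*} [AddCommGroup V] [Module (ZMod 2) V]

theorem exists_subset_sum_eq_of_mem_span {T : Finset V} {d : V}
    (hd : d ∈ span (ZMod 2) (T : Set V)) : ∃ I ⊆ T, ∑ x ∈ I, x = d := by
  obtain ⟨f, -, rfl⟩ := mem_span_finset.mp hd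
  refine ⟨{v ∈ T | f v = 1}, filter_subset _ _, ?_⟩
  rw [sum_filter]
  refine sum_congr rfl fun v _ ↦ ?_
  rcases (show ∀ a : ZMod 2, a = 0 ∨ a = 1 by decide) (f v) with h | h <;> simp [h]

theorem sum_symmDiff [DecidableEq V] (I J : Finset V) :
    ∑ x ∈ I ∆ J, x = ∑ x ∈ I, x + ∑ x ∈ J, x := by
  rw [← sum_union_inter, ← sum_sdiff (inter_subset_union (s := I) (t := J)), add_assoc,
    ZModModule.add_self, add_zero, symmDiff_eq_sup_sdiff_inf]
  rfl

structure IsZeroSumCircuit (S : Finset V) : Prop where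
  sum_eq_zero : ∑ x ∈ S, x = 0
  linearIndepOn_of_ssubset ⦃T : Finset V⦄ : T ⊂ S → LinearIndepOn (ZMod 2) id (T : Set V)

namespace IsZeroSumCircuit

variable {S I J : Finset V}

theorem of_card_eq_add_one {n : ℕ} (hS : #S = n + 1) (hsum : ∑ x ∈ S, x = 0)
    (hind : ∀ T ⊆ S, #T = n → LinearIndependent (ZMod 2) (Subtype.val : ↥(T : Set V) → V)) :
    IsZeroSumCircuit S where
  sum_eq_zero := hsum
  linearIndepOn_of_ssubset T hT := by
    classical
    obtain ⟨u, huS, huT⟩ := exists_of_ssubset hT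
    refine LinearIndepOn.mono (v := id) (hind _ (erase_subset u S) ?_) ?_
    · rw [card_erase_of_mem huS, hS, Nat.add_sub_cancel]
    · exact coe_subset.mpr fun v hv ↦ mem_erase.mpr ⟨fun h ↦ huT (h ▸ hv), hT.subset hv⟩

variable (hS : IsZeroSumCircuit S)
include hS

theorem sum_sdiff_eq [DecidableEq V] (hI : I ⊆ S) : ∑ x ∈ S \ I, x = ∑ x ∈ I, x := by
  have h := sum_sdiff hI (f := fun x ↦ x)
  rwa [hS.sum_eq_zero, ← ZModModule.sub_eq_add, sub_eq_zero] at h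

theorem eq_or_eq_sdiff_of_sum_eq [DecidableEq V] (hI : I ⊆ S) (hJ : J ⊆ S)
    (h : ∑ x ∈ I, x = ∑ x ∈ J, x) : J = I ∨ J = S \ I := by
  have hzero : ∑ x ∈ I ∆ J, x = 0 := by rw [sum_symmDiff, h, ZModModule.add_self]
  rcases (symmDiff_le (le_sup_of_le_right hI) (le_sup_of_le_right hJ)).eq_or_ssubset
    with hIJ | hIJ
  · right
    ext v
    have := congrArg (v ∈ ·) hIJ
    simp only [mem_symmDiff, eq_iff_iff] at this
    grind
  · left
    exact (symmDiff_eq_empty.mp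
      ((hS.linearIndepOn_of_ssubset hIJ).eq_empty_of_sum_eq_zero subset_rfl hzero)).symm

theorem subset_or_sdiff_subset_of_mem_span [DecidableEq V] (hI : I ⊆ S) {A : Finset V}
    (hA : A ⊆ S) (hd : ∑ x ∈ I, x ∈ span (ZMod 2) (A : Set V)) : I ⊆ A ∨ S \ I ⊆ A := by
  obtain ⟨J, hJA, hJ⟩ := exists_subset_sum_eq_of_mem_span hd
  rcases hS.eq_or_eq_sdiff_of_sum_eq hI (hJA.trans hA) hJ.symm with rfl | rfl
  · exact .inl hJA
  · exact .inr hJA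

open Classical in
theorem card_filter_mem_span_le_seven (hS6 : #S = 6) {d : V} (hd0 : d ≠ 0) (hdS : d ∉ S) :
    #((S.powersetCard 4).filter fun A : Finset V ↦ d ∈ span (ZMod 2) (A : Set V)) ≤ 7 := by
  by_cases hdspan : d ∉ span (ZMod 2) (S : Set V)
  · rw [filter_false_of_mem fun A hA hd ↦
      hdspan (span_mono (coe_subset.mpr (mem_powersetCard.mp hA).1) hd)]
    simp
  obtain ⟨I, hIS, rfl⟩ := exists_subset_sum_eq_of_mem_span (not_not.mp hdspan)
  have hI := two_le_card_of_sum_eq rfl hd0 fun h ↦ hdS (hIS h)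
  have hIc := two_le_card_of_sum_eq (hS.sum_sdiff_eq hIS) hd0 fun h ↦ hdS (sdiff_subset h)
  have hcover :
      ((S.powersetCard 4).filter fun A : Finset V ↦ ∑ x ∈ I, x ∈ span (ZMod 2) (A : Set V)) ⊆
        (S.powersetCard 4).filter (I ⊆ ·) ∪ (S.powersetCard 4).filter (S \ I ⊆ ·) := by
    intro A hA
    rw [mem_filter, mem_powersetCard] at hA
    rw [mem_union, mem_filter, mem_filter]
    rcases hS.subset_or_sdiff_subset_of_mem_span hIS hA.1.1 hA.2 with h | h
    · exact .inl ⟨mem_powersetCard.mpr hA.1, h⟩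
    · exact .inr ⟨mem_powersetCard.mpr hA.1, h⟩
  have hIc' := card_sdiff_of_subset hIS
  refine (card_le_card hcover).trans ((card_union_le _ _).trans ?_)
  rw [card_filter_powersetCard_subset _ _ _ hIS (by omega),
    card_filter_powersetCard_subset _ _ _ sdiff_subset (by omega),
    hIc', hS6]
  rw [hIc', hS6] at hIc
  obtain h | h | h : #I = 2 ∨ #I = 3 ∨ #I = 4 := by omega
  all_goals rw [h]; decide

end IsZeroSumCircuit

end ZModTwo

theorem IFree.exists_mem_span_notMem {r n : ℕ} {E : Set (V2 r)} (hE : IFree n E)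
    {T : Finset (V2 r)} (hTn : #T = n) (hT : LinearIndepOn (ZMod 2) id (T : Set (V2 r)))
    (hTE : (T : Set (V2 r)) ⊆ E) : ∃ z ∈ E, z ∈ span (ZMod 2) (T : Set (V2 r)) ∧ z ∉ T := by
  by_contra! h
  exact hE ⟨T, hTn, hT, Set.Subset.antisymm (fun z hz ↦ h z hz.1 hz.2)
    fun z hz ↦ ⟨hTE hz, subset_span hz⟩⟩

theorem IFree.exists_add_mem_span {r : ℕ} {E : Set (V2 r)} {A : Finset (V2 r)}
    (hE : IFree (#A + 1) E) {H : Submodule (ZMod 2) (V2 r)} {S : Finset (V2 r)}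
    (hS : IsZeroSumCircuit S) (hEH : E ∩ (H : Set (V2 r)) = S) (hAS : A ⊆ S)
    (hA : #A + 2 ≤ #S) {x : V2 r} (hxE : x ∈ E) (hxH : x ∉ H) :
    ∃ z ∈ E, z ∉ H ∧ z ≠ x ∧ x + z ∈ span (ZMod 2) (A : Set (V2 r)) := by
  have hSE : (S : Set (V2 r)) ⊆ E := hEH ▸ Set.inter_subset_left
  have hspanA : span (ZMod 2) (A : Set (V2 r)) ≤ H :=
    span_le.mpr ((coe_subset.mpr hAS).trans (hEH ▸ Set.inter_subset_right))
  have hinsert {z : V2 r} (hz : z ∈ S) : insert z A ⊂ S :=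
    (insert_subset hz hAS).ssubset_of_ne fun h ↦ by
      have := card_insert_le z A
      rw [h] at this
      omega
  have hxA : x ∉ A := fun h ↦ hxH (hspanA (subset_span h))
  have hT : LinearIndepOn (ZMod 2) id ((insert x A : Finset (V2 r)) : Set (V2 r)) := by
    obtain ⟨u, hu⟩ : S.Nonempty := card_pos.mp (by omega)
    rw [coe_insert]
    exact (hS.linearIndepOn_of_ssubset ((subset_insert u A).trans_ssubset (hinsert hu))).id_insert
      fun h ↦ hxH (hspanA h)
  obtain ⟨z, hzE, hz, hzT⟩ := hE.exists_mem_span_notMem (card_insert_of_notMem hxA) hT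
    (by rw [coe_insert]; exact Set.insert_subset hxE ((coe_subset.mpr hAS).trans hSE))
  rw [coe_insert, mem_span_insert] at hz
  obtain ⟨c, w, hw, rfl⟩ := hz
  rcases (show ∀ a : ZMod 2, a = 0 ∨ a = 1 by decide) c with rfl | rfl
  · rw [zero_smul, zero_add] at hzE hzT
    have hwS : w ∈ S := by
      rw [← mem_coe, ← hEH]
      exact ⟨hzE, hspanA hw⟩
    have hwA : w ∉ A := fun h ↦ hzT (mem_insert_of_mem h)
    have hwAind : LinearIndepOn (ZMod 2) id (insert w (A : Set (V2 r))) := by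
      rw [← coe_insert]
      exact hS.linearIndepOn_of_ssubset (hinsert hwS)
    exact absurd hw ((linearIndepOn_id_insert (mem_coe.not.mpr hwA)).mp hwAind).2
  · rw [one_smul] at hzE hzT
    refine ⟨x + w, hzE, fun h ↦ hxH ?_, fun h ↦ hzT (by rw [h]; exact mem_insert_self x A), ?_⟩
    · rw [← add_zero x, ← ZModModule.add_self w, ← add_assoc]
      exact H.add_mem h (hspanA hw)
    · rwa [← add_assoc, ZModModule.add_self, zero_add]

theorem stmt16_general (E : Set (V2 7))
    (hTF : TriangleFree E) (hI5 : IFree 5 E)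
    (H : Submodule (ZMod 2) (V2 7))
    (S : Finset (V2 7)) (hS6 : S.card = 6)
    (hsum : (∑ x ∈ S, x) = 0)
    (hind : ∀ T ⊆ S, T.card = 5 →
      LinearIndependent (ZMod 2) (Subtype.val : ↥(T : Set (V2 7)) → V2 7))
    (hEH : E ∩ (H : Set (V2 7)) = (S : Set (V2 7)))
    (hne : (E \ (H : Set (V2 7))).Nonempty) :
    4 ≤ (E \ (H : Set (V2 7))).ncard := by
  classical
  have hS : IsZeroSumCircuit S := .of_card_eq_add_one hS6 hsum hind
  have hSE : (S : Set (V2 7)) ⊆ E := hEH ▸ Set.inter_subset_left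
  obtain ⟨x, hx⟩ := hne
  set X := (E \ (H : Set (V2 7))).toFinset
  have hcover : S.powersetCard 4 ⊆ (X.erase x).biUnion fun z ↦
      (S.powersetCard 4).filter fun A : Finset (V2 7) ↦ x + z ∈ span (ZMod 2) (A : Set (V2 7)) := by
    intro A hA
    obtain ⟨hAS, hA4⟩ := mem_powersetCard.mp hA
    obtain ⟨z, hzE, hzH, hzx, hz⟩ :=
      IFree.exists_add_mem_span (hA4 ▸ hI5) hS hEH hAS (by omega) hx.1 hx.2
    exact mem_biUnion.mpr ⟨z, mem_erase.mpr ⟨hzx, Set.mem_toFinset.mpr ⟨hzE, hzH⟩⟩,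
      mem_filter.mpr ⟨hA, hz⟩⟩
  have hfiber : ∀ z ∈ X.erase x, #((S.powersetCard 4).filter
      fun A : Finset (V2 7) ↦ x + z ∈ span (ZMod 2) (A : Set (V2 7))) ≤ 7 := by
    intro z hz
    obtain ⟨hzx, hzX⟩ := mem_erase.mp hz
    have hxz := hTF x hx.1 z (Set.mem_toFinset.mp hzX).1
    refine hS.card_filter_mem_span_le_seven hS6 (fun h ↦ hzx ?_) fun h ↦ hxz (hSE h)
    rw [← sub_eq_zero, ZModModule.sub_eq_add, add_comm, h]
  have hcount := (card_le_card hcover).trans (card_biUnion_le_card_mul _ _ _ hfiber)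
  rw [card_powersetCard, hS6, show Nat.choose 6 4 = 15 from rfl,
    card_erase_of_mem (Set.mem_toFinset.mpr hx)] at hcount
  rw [Set.ncard_eq_toFinset_card']
  omega

theorem stmt16 (E : Set (V2 7)) (h0 : (0 : V2 7) ∉ E)
    (hTF : TriangleFree E) (hI5 : IFree 5 E) (hC5 : CircFree 5 E)
    (H : Submodule (ZMod 2) (V2 7)) (hH : Module.finrank (ZMod 2) H = 6)
    (S : Finset (V2 7)) (hS6 : S.card = 6) (hSH : (S : Set (V2 7)) ⊆ (H : Set (V2 7)))
    (hsum : (∑ x ∈ S, x) = 0)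
    (hind : ∀ T ⊆ S, T.card = 5 →
      LinearIndependent (ZMod 2) (Subtype.val : ↥(T : Set (V2 7)) → V2 7))
    (hEH : E ∩ (H : Set (V2 7)) = (S : Set (V2 7)))
    (hne : (E \ (H : Set (V2 7))).Nonempty) :
    4 ≤ (E \ (H : Set (V2 7))).ncard :=
  stmt16_general E hTF hI5 H S hS6 hsum hind hEH hne
end
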